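/- arXiv:2301.06147 — 6 statements merged into one kernel-verified Lean document; each statement's English description precedes it below -/
import Mathlib

section
/- The left semi-tensor product of matrices is associative: if A, B, C are real matrices with dimensions such that the STPs are well defined (column number of each left factor divides or is divided by the row number of the right factor), then (A⋉B)⋉C = A⋉(B⋉C). -/
/-!
Both bracketings equal `(A ⊗ I_{t₁}) (B ⊗ I_{t₂}) (C ⊗ I_{t₃})` for the same exponents. Expanding
`(A ⋉ B) ⋉ C` with `(XY) ⊗ I = (X ⊗ I)(Y ⊗ I)` and `(U ⊗ I_r) ⊗ I_t = U ⊗ I_{rt}` gives exponents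
built from `lcm(s, p)` and `lcm(q·lcm(s, p)/p, u)`, and `A ⋉ (B ⋉ C)` gives ones built from
`lcm(q, u)` and `lcm(s, p·lcm(q, u)/q)`. They agree because
`q · lcm(s, p·lcm(q, u)/q) = p · lcm(q·lcm(s, p)/p, u)`, both sides being `lcm(qs, qp, pu)`.
-/

open Matrix Kronecker

/-- `U ⊗ I_s`, with the product index types flattened to `Fin`s. -/
noncomputable def kronI {m n : ℕ} (s : ℕ) (U : Matrix (Fin m) (Fin n) ℝ) :
    Matrix (Fin (m * s)) (Fin (n * s)) ℝ :=
  Matrix.reindex finProdFinEquiv finProdFinEquiv (U ⊗ₖ (1 : Matrix (Fin s) (Fin s) ℝ))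

/-- The left semi-tensor product of matrices `A ∈ ℝ^{m×s}` and `B ∈ ℝ^{p×q}`:
`A ⋉ B = (A ⊗ I_{t/s})(B ⊗ I_{t/p})` with `t = lcm(s,p)`.  Under the multiple dimension
condition (`p ∣ s` or `s ∣ p`) this is exactly `A (B ⊗ Iₙ)` when `s = n·p`, and
`(A ⊗ Iₙ) B` when `p = n·s`. -/
noncomputable def stp {m s p q : ℕ} (A : Matrix (Fin m) (Fin s) ℝ)
    (B : Matrix (Fin p) (Fin q) ℝ) :
    Matrix (Fin (m * (Nat.lcm s p / s))) (Fin (q * (Nat.lcm s p / p))) ℝ :=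
  kronI (Nat.lcm s p / s) A *
    Matrix.reindex
      (finCongr ((Nat.mul_div_cancel' (Nat.dvd_lcm_right s p)).trans
        (Nat.mul_div_cancel' (Nat.dvd_lcm_left s p)).symm))
      (Equiv.refl _)
      (kronI (Nat.lcm s p / p) B)

section castMul

variable {R : Type*} [NonUnitalSemiring R] {a b b' c c' d : ℕ}

def castMul (h : b' = b) (X : Matrix (Fin a) (Fin b) R) (Y : Matrix (Fin b') (Fin c) R) :
    Matrix (Fin a) (Fin c) R :=
  X * Matrix.reindex (finCongr h) (Equiv.refl _) Y

theorem castMul_assoc (h₁ : b' = b) (h₂ : c' = c) (X : Matrix (Fin a) (Fin b) R)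
    (Y : Matrix (Fin b') (Fin c) R) (Z : Matrix (Fin c') (Fin d) R) :
    castMul h₂ (castMul h₁ X Y) Z = castMul h₁ X (castMul h₂ Y Z) := by
  subst h₁ h₂
  exact Matrix.mul_assoc X Y Z

theorem castMul_heq_castMul {a₁ a₂ b₁ b₂ b₁' b₂' c₁ c₂ : ℕ} {h₁ : b₁' = b₁} {h₂ : b₂' = b₂}
    {X₁ : Matrix (Fin a₁) (Fin b₁) R} {Y₁ : Matrix (Fin b₁') (Fin c₁) R}
    {X₂ : Matrix (Fin a₂) (Fin b₂) R} {Y₂ : Matrix (Fin b₂') (Fin c₂) R}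
    (ha : a₁ = a₂) (hb : b₁ = b₂) (hc : c₁ = c₂) (hX : HEq X₁ X₂) (hY : HEq Y₁ Y₂) :
    HEq (castMul h₁ X₁ Y₁) (castMul h₂ X₂ Y₂) := by
  subst ha hb hc h₁ h₂
  cases hX
  cases hY
  rfl

end castMul

theorem stp_eq_castMul {m s p q : ℕ} (A : Matrix (Fin m) (Fin s) ℝ)
    (B : Matrix (Fin p) (Fin q) ℝ) :
    stp A B = castMul ((Nat.mul_div_cancel' (Nat.dvd_lcm_right s p)).trans
        (Nat.mul_div_cancel' (Nat.dvd_lcm_left s p)).symm)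
      (kronI (Nat.lcm s p / s) A) (kronI (Nat.lcm s p / p) B) := rfl

theorem kronI_mul {a b c : ℕ} (t : ℕ) (X : Matrix (Fin a) (Fin b) ℝ)
    (Y : Matrix (Fin b) (Fin c) ℝ) : kronI t (X * Y) = kronI t X * kronI t Y := by
  simp only [kronI, Matrix.reindex_apply, Matrix.submatrix_mul_equiv, ← Matrix.mul_kronecker_mul,
    Matrix.one_mul]

theorem kronI_castMul {a b b' c : ℕ} (t : ℕ) (h : b' = b) (X : Matrix (Fin a) (Fin b) ℝ)
    (Y : Matrix (Fin b') (Fin c) ℝ) :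
    kronI t (castMul h X Y) = castMul (congrArg (· * t) h) (kronI t X) (kronI t Y) := by
  subst h
  exact kronI_mul t X Y

theorem kronI_apply {m n : ℕ} (t : ℕ) (U : Matrix (Fin m) (Fin n) ℝ)
    (i : Fin (m * t)) (j : Fin (n * t)) :
    kronI t U i j = if i.modNat = j.modNat then U i.divNat j.divNat else 0 := by
  simp [kronI, finProdFinEquiv, Matrix.one_apply]

theorem mod_eq_mod_and_div_mod_eq_iff (x y r t : ℕ) :
    x % t = y % t ∧ x / t % r = y / t % r ↔ x % (t * r) = y % (t * r) := by
  rw [← Nat.mod_mul_right_div_self, ← Nat.mod_mul_right_div_self, ← Nat.mod_mul_right_mod x t r,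
    ← Nat.mod_mul_right_mod y t r]
  constructor
  · rintro ⟨h1, h2⟩
    rw [← Nat.mod_add_div (x % (t * r)) t, ← Nat.mod_add_div (y % (t * r)) t, h1, h2]
  · intro h
    rw [h]; exact ⟨rfl, rfl⟩

theorem kronI_kronI {m n : ℕ} (r t : ℕ) (U : Matrix (Fin m) (Fin n) ℝ) :
    HEq (kronI t (kronI r U)) (kronI (r * t) U) := by
  refine (Fin.heq_fun₂_iff (mul_assoc m r t) (mul_assoc n r t)).2 fun i j => ?_
  simp only [kronI_apply, Fin.ext_iff, Fin.coe_modNat, Fin.coe_divNat, ← ite_and,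
    mod_eq_mod_and_div_mod_eq_iff, mul_comm r t]
  congr 2 <;> ext <;> simp [Nat.div_div_eq_div_mul, mul_comm t r]

theorem mul_lcm_mul_lcm_div_comm (s p q u : ℕ) :
    q * Nat.lcm s (p * (Nat.lcm q u / q)) = p * Nat.lcm (q * (Nat.lcm s p / p)) u := by
  rw [← Nat.lcm_mul_left, ← Nat.lcm_mul_left, mul_left_comm q p, mul_left_comm p q (_ / p),
    Nat.mul_div_cancel' (Nat.dvd_lcm_right s p), Nat.mul_div_cancel' (Nat.dvd_lcm_left q u),
    ← Nat.lcm_mul_left, ← Nat.lcm_mul_left, ← Nat.lcm_assoc, mul_comm p q]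

/-- `(A ⋉ B) ⋉ C` carries the Kronecker exponents `a * b, a' * b, b'` on `A, B, C`, and
`A ⋉ (B ⋉ C)` carries `d, g * d', g' * d'`. -/
theorem stp_assoc_exponents (s p q u : ℕ) :
    let a := Nat.lcm s p / s; let a' := Nat.lcm s p / p
    let b := Nat.lcm (q * a') u / (q * a'); let b' := Nat.lcm (q * a') u / u
    let g := Nat.lcm q u / q; let g' := Nat.lcm q u / u
    let d := Nat.lcm s (p * g) / s; let d' := Nat.lcm s (p * g) / (p * g)
    a * b = d ∧ a' * b = g * d' ∧ b' = g' * d' := by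
  intro a a' b b' g g' d d'
  have ha : s * a = Nat.lcm s p := Nat.mul_div_cancel' (Nat.dvd_lcm_left s p)
  have ha' : p * a' = Nat.lcm s p := Nat.mul_div_cancel' (Nat.dvd_lcm_right s p)
  have hb : q * a' * b = Nat.lcm (q * a') u := Nat.mul_div_cancel' (Nat.dvd_lcm_left _ u)
  have hb' : u * b' = Nat.lcm (q * a') u := Nat.mul_div_cancel' (Nat.dvd_lcm_right _ u)
  have hg : q * g = Nat.lcm q u := Nat.mul_div_cancel' (Nat.dvd_lcm_left q u)
  have hg' : u * g' = Nat.lcm q u := Nat.mul_div_cancel' (Nat.dvd_lcm_right q u)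
  have hd : s * d = Nat.lcm s (p * g) := Nat.mul_div_cancel' (Nat.dvd_lcm_left s _)
  have hd' : p * g * d' = Nat.lcm s (p * g) := Nat.mul_div_cancel' (Nat.dvd_lcm_right s _)
  have e₂ : a' * b = g * d' := by
    rcases Nat.eq_zero_or_pos p with rfl | hp
    · simp [a', g, d']
    rcases Nat.eq_zero_or_pos q with rfl | hq
    · simp [b, g]
    apply Nat.eq_of_mul_eq_mul_left (Nat.mul_pos hp hq)
    calc p * q * (a' * b) = p * Nat.lcm (q * a') u := by rw [← hb]; ring
      _ = q * Nat.lcm s (p * g) := (mul_lcm_mul_lcm_div_comm s p q u).symm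
      _ = p * q * (g * d') := by rw [← hd']; ring
  refine ⟨?_, e₂, ?_⟩
  · rcases Nat.eq_zero_or_pos s with rfl | hs
    · simp [a, d]
    apply Nat.eq_of_mul_eq_mul_left hs
    calc s * (a * b) = p * (a' * b) := by rw [← mul_assoc, ha, ← ha', mul_assoc]
      _ = s * d := by rw [e₂, hd, ← hd', mul_assoc]
  · rcases Nat.eq_zero_or_pos u with rfl | hu
    · simp [b', g']
    apply Nat.eq_of_mul_eq_mul_left hu
    calc u * b' = q * (a' * b) := by rw [hb', ← hb, mul_assoc]
      _ = u * (g' * d') := by rw [e₂, ← mul_assoc, hg, ← hg', mul_assoc]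

theorem stp_assoc_general {m s p q u v : ℕ}
    (A : Matrix (Fin m) (Fin s) ℝ) (B : Matrix (Fin p) (Fin q) ℝ)
    (C : Matrix (Fin u) (Fin v) ℝ) :
    HEq (stp (stp A B) C) (stp A (stp B C)) := by
  obtain ⟨e₁, e₂, e₃⟩ := stp_assoc_exponents s p q u
  rw [stp_eq_castMul (stp A B), stp_eq_castMul A B, kronI_castMul, castMul_assoc,
    stp_eq_castMul A, stp_eq_castMul B C, kronI_castMul]
  refine castMul_heq_castMul (by rw [mul_assoc, e₁]) (by rw [mul_assoc, e₁])
    (by rw [e₃, mul_assoc]) ((kronI_kronI _ _ A).trans (by rw [e₁]))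
    (castMul_heq_castMul (by rw [mul_assoc, e₂, mul_assoc]) (by rw [mul_assoc, e₂, mul_assoc])
      (by rw [e₃, mul_assoc]) ((kronI_kronI _ _ B).trans ?_) ?_)
  · rw [e₂]; exact (kronI_kronI _ _ B).symm
  · rw [e₃]; exact (kronI_kronI _ _ C).symm

/-- the left semi-tensor product of matrices is associative: if `A, B, C`
are real matrices with dimensions such that all the STPs involved are well defined (the
column number of each left factor divides or is divided by the row number of the right
factor), then `(A ⋉ B) ⋉ C = A ⋉ (B ⋉ C)` (as matrices of the same — propositionally
equal — sizes, hence `HEq`). -/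
theorem stp_assoc {m s p q u v : ℕ}
    (A : Matrix (Fin m) (Fin s) ℝ) (B : Matrix (Fin p) (Fin q) ℝ)
    (C : Matrix (Fin u) (Fin v) ℝ)
    (hAB : s ∣ p ∨ p ∣ s)
    (hBC : q ∣ u ∨ u ∣ q)
    (hABC : q * (Nat.lcm s p / p) ∣ u ∨ u ∣ q * (Nat.lcm s p / p))
    (hA_BC : s ∣ p * (Nat.lcm q u / q) ∨ p * (Nat.lcm q u / q) ∣ s) :
    HEq (stp (stp A B) C) (stp A (stp B C)) :=
  stp_assoc_general A B C
end

section
/- Repeated modal STP along the same mode satisfies: (𝒜 ⋉ₜ V) ⋉ₜ W = 𝒜 ⋉ₜ (W ⋉ V), where W ⋉ V is the matrix STP of W and V, whenever the dimensions are compatible. -/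
/-!
Mode-`t` products compose like matrix products, `(𝒜 ×ₜ U) ×ₜ U' = 𝒜 ×ₜ (U' U)`, so both sides
are mode-`t` products of `𝒜` with one matrix. Splitting `I_{s''s} = I_{s''} ⊗ I_s` and using the
mixed-product rule, `(W ⊗ I_{s''s}) (V ⊗ I_s) = ((W ⊗ I_{s''}) V) ⊗ I_s = (W ⋉ V) ⊗ I_s`.
-/

open Matrix Kronecker

/-- Reinterpret a tensor along a pointwise equality of dimension vectors. -/
def castTensor {d : ℕ} {n n' : Fin d → ℕ} (h : ∀ i, n i = n' i)
    (A : ((i : Fin d) → Fin (n i)) → ℝ) : ((i : Fin d) → Fin (n' i)) → ℝ :=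
  fun idx => A fun i => Fin.cast (h i).symm (idx i)

/-- The conventional tensor mode-`k` product `𝒜 ×ₖ U` of a tensor
`𝒜 ∈ ℝ^{n₁×⋯×n_d}` with a matrix `U ∈ ℝ^{m×n_k}`. -/
noncomputable def modeMul {d : ℕ} {n : Fin d → ℕ} {m : ℕ} (k : Fin d)
    (A : ((i : Fin d) → Fin (n i)) → ℝ) (U : Matrix (Fin m) (Fin (n k)) ℝ) :
    ((i : Fin d) → Fin (Function.update n k m i)) → ℝ :=
  fun idx => ∑ j : Fin (n k),
    U (Fin.cast (by simp) (idx k)) j *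
      A (fun i =>
        if h : i = k then Fin.cast (congrArg n h).symm j
        else Fin.cast (by rw [Function.update_of_ne h]) (idx i))

/-- The mode-`k` semi-tensor product `𝒜 ⋉ₖ U := 𝒜 ×ₖ (U ⊗ I_s)` of a tensor
`𝒜 ∈ ℝ^{n₁×⋯×n_d}` with `U ∈ ℝ^{m×(n_k/s)}`, where `s` is a factor of `n_k`
(recorded by the hypothesis `c * s = n k`, `c = n_k/s`). -/
noncomputable def modeSTP {d : ℕ} {n : Fin d → ℕ} {m c s : ℕ} (k : Fin d)
    (h : c * s = n k) (A : ((i : Fin d) → Fin (n i)) → ℝ)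
    (U : Matrix (Fin m) (Fin c) ℝ) :
    ((i : Fin d) → Fin (Function.update n k (m * s) i)) → ℝ :=
  modeMul k A (Matrix.reindex (Equiv.refl _) (finCongr h) (kronI s U))

/-- The matrix left semi-tensor product `W ⋉ V = (W ⊗ I_{n'}) V` in the case where the
row number `m` of `V` divides the column number of `W` via `m = c' · n'`
(recorded as `c' * n' = m`). -/
noncomputable def stpL {a c' m q : ℕ} (n' : ℕ) (h : c' * n' = m)
    (W : Matrix (Fin a) (Fin c') ℝ) (V : Matrix (Fin m) (Fin q) ℝ) :
    Matrix (Fin (a * n')) (Fin q) ℝ :=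
  Matrix.reindex (Equiv.refl _) (finCongr h) (kronI n' W) * V

theorem finProdFinEquiv_assoc {a b c : ℕ} (x : Fin a) (y : Fin b) (z : Fin c) :
    Fin.cast (mul_assoc a b c).symm (finProdFinEquiv (x, finProdFinEquiv (y, z))) =
      finProdFinEquiv (finProdFinEquiv (x, y), z) := by
  ext
  simp only [finProdFinEquiv_apply_val, Fin.val_cast]
  ring

theorem kronI_mul_kronI {l m n : ℕ} (s : ℕ) (U : Matrix (Fin l) (Fin m) ℝ)
    (V : Matrix (Fin m) (Fin n) ℝ) : kronI s U * kronI s V = kronI s (U * V) := by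
  simp only [kronI, Matrix.reindex_apply, Matrix.submatrix_mul_equiv, ← Matrix.mul_kronecker_mul,
    Matrix.mul_one]

theorem kronI_reindex_finCongr {l m m' : ℕ} (s : ℕ) (h : m = m') (U : Matrix (Fin l) (Fin m) ℝ) :
    kronI s (Matrix.reindex (Equiv.refl _) (finCongr h) U) =
      Matrix.reindex (Equiv.refl _) (finCongr (by rw [h])) (kronI s U) := by
  subst h; rfl

theorem kronI_mul_eq_kronI_kronI {m n : ℕ} (s s' : ℕ) (U : Matrix (Fin m) (Fin n) ℝ) :
    kronI (s' * s) U =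
      Matrix.reindex (finCongr (mul_assoc m s' s)) (finCongr (mul_assoc n s' s))
        (kronI s (kronI s' U)) := by
  ext i j
  obtain ⟨⟨i₁, i'⟩, rfl⟩ := finProdFinEquiv.surjective i
  obtain ⟨⟨i₂, i₃⟩, rfl⟩ := finProdFinEquiv.surjective i'
  obtain ⟨⟨j₁, j'⟩, rfl⟩ := finProdFinEquiv.surjective j
  obtain ⟨⟨j₂, j₃⟩, rfl⟩ := finProdFinEquiv.surjective j'
  simp only [kronI, Matrix.reindex_apply, Matrix.submatrix_apply, finCongr_symm, finCongr_apply,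
    finProdFinEquiv_assoc, Equiv.symm_apply_apply, Matrix.kroneckerMap_apply, Matrix.one_apply,
    EmbeddingLike.apply_eq_iff_eq, Prod.mk.injEq, ite_and]
  split_ifs <;> simp

-- Without the ascription on the cast, `*` is elaborated before the index types are known and
-- resolves to `CStarMatrix`'s product.
theorem kronI_mul_kronI_eq_kronI_stpL {a c c' k m s s'' : ℕ} (h : c * s = k) (hm : c' * s'' = m)
    (W : Matrix (Fin a) (Fin c') ℝ) (V : Matrix (Fin m) (Fin c) ℝ) :
    Matrix.reindex (Equiv.refl _)
        (finCongr (by rw [← hm, mul_assoc] : c' * (s'' * s) = m * s)) (kronI (s'' * s) W) *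
        Matrix.reindex (Equiv.refl _) (finCongr h) (kronI s V) =
      Matrix.reindex (finCongr (mul_assoc a s'' s)) (Equiv.refl _)
        (Matrix.reindex (Equiv.refl _) (finCongr h) (kronI s (stpL s'' hm W V))) := by
  rw [kronI_mul_eq_kronI_kronI s s'' W, stpL, ← kronI_mul_kronI, kronI_reindex_finCongr]
  ext i j
  simp only [Matrix.mul_apply, Matrix.reindex_apply, Matrix.submatrix_apply, finCongr_symm,
    finCongr_apply, Equiv.refl_symm, Equiv.refl_apply, Fin.cast_cast]

theorem modeMul_modeMul {d : ℕ} {n : Fin d → ℕ} {m p q : ℕ} (t : Fin d)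
    (hq : q = Function.update n t m t) (A : ((i : Fin d) → Fin (n i)) → ℝ)
    (U : Matrix (Fin m) (Fin (n t)) ℝ) (U' : Matrix (Fin p) (Fin q) ℝ) :
    modeMul t (modeMul t A U) (Matrix.reindex (Equiv.refl _) (finCongr hq) U') =
      castTensor (fun i => by rw [Function.update_idem])
        (modeMul t A (Matrix.reindex (Equiv.refl _)
          (finCongr (hq.trans (Function.update_self t m n))) U' * U)) := by
  funext idx
  simp only [modeMul, castTensor, Matrix.reindex_apply, Matrix.submatrix_apply, Matrix.mul_apply,
    Finset.sum_mul, Finset.mul_sum, Equiv.refl_symm, Equiv.refl_apply, finCongr_symm,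
    finCongr_apply, dite_true, Fin.cast_cast]
  rw [Finset.sum_comm]
  refine Finset.sum_congr rfl fun k _ => ?_
  refine Fintype.sum_equiv (M := ℝ) (finCongr (Function.update_self t m n)) _ _ fun j => ?_
  rw [← mul_assoc]
  congr 2
  funext i
  by_cases hi : i = t <;> simp [hi]

theorem modeMul_reindex_finCongr {d : ℕ} {n : Fin d → ℕ} {p p' : ℕ} (t : Fin d) (e : p = p')
    (A : ((i : Fin d) → Fin (n i)) → ℝ) (M : Matrix (Fin p) (Fin (n t)) ℝ) :
    modeMul t A (Matrix.reindex (finCongr e) (Equiv.refl _) M) =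
      castTensor (fun i => by rw [e]) (modeMul t A M) := by
  subst e; rfl

theorem castTensor_castTensor {d : ℕ} {n n' n'' : Fin d → ℕ} (h : ∀ i, n i = n' i)
    (h' : ∀ i, n' i = n'' i) (A : ((i : Fin d) → Fin (n i)) → ℝ) :
    castTensor h' (castTensor h A) = castTensor (fun i => (h i).trans (h' i)) A :=
  rfl

/-- repeated modal STP along the same mode satisfies
`(𝒜 ⋉ₜ V) ⋉ₜ W = 𝒜 ⋉ₜ (W ⋉ V)` whenever the dimensions are compatible; the
compatibility condition is `I₃ = I₃′ ⊗ I₂`, i.e. `s' = s'' * s` below. -/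
theorem modeSTP_modeSTP {d : ℕ} {n : Fin d → ℕ} {m c s a c' s' s'' : ℕ}
    (t : Fin d) (h : c * s = n t) (hm : c' * s'' = m) (hs : s' = s'' * s)
    (A : ((i : Fin d) → Fin (n i)) → ℝ)
    (V : Matrix (Fin m) (Fin c) ℝ) (W : Matrix (Fin a) (Fin c') ℝ) :
    modeSTP t
        (show c' * s' = Function.update n t (m * s) t by
          rw [Function.update_self, hs, ← hm, mul_assoc])
        (modeSTP t h A V) W =
      castTensor
        (fun i => by rw [Function.update_idem, hs, mul_assoc])
        (modeSTP t h A (stpL s'' hm W V)) := by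
  subst hs
  unfold modeSTP
  rw [modeMul_modeMul, kronI_mul_kronI_eq_kronI_stpL h hm, modeMul_reindex_finCongr,
    castTensor_castTensor]
end

section
/- Kronecker nearest approximation via rearrangement: let A ∈ ℝ^{m×n} with m = m₁m₂, n = n₁n₂, and let Ã ∈ ℝ^{m₁n₁×m₂n₂} be the rearrangement of A whose ((j−1)m₁+i)-th row is vec(A_{i,j})ᵀ where A_{i,j} is the (i,j) block of size m₂×n₂. If σ̃₁ is the largest singular value of Ã with corresponding singular vectors u, v, then B ∈ ℝ^{m₁×n₁}, C ∈ ℝ^{m₂×n₂} defined by vec(B) = √σ̃₁ u, vec(C) = √σ̃₁ v minimize ‖A − B⊗C‖_F over all B, C of those sizes. -/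
/-!
The rearrangement only permutes entries, so it preserves the Frobenius norm, and it sends
`B ⊗ C` to the rank-one matrix `vec(B) vec(C)ᵀ`. The problem is therefore the best rank-one
approximation of `Ã`: expanding `‖Ã - x yᵀ‖² = ‖Ã‖² - 2 xᵀÃy + |x|²|y|²` and bounding
`xᵀÃy ≤ σ |x| |y|` gives `‖Ã - x yᵀ‖² ≥ ‖Ã‖² - σ²`, with equality at `x yᵀ = σ u vᵀ`.
-/

open Matrix Kronecker

/-- The Frobenius norm of a real matrix. -/
noncomputable def frob {α β : Type*} [Fintype α] [Fintype β] (M : Matrix α β ℝ) : ℝ :=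
  Real.sqrt (∑ i, ∑ j, (M i j) ^ 2)

/-- The Van Loan–Pitsianis rearrangement `Ã` of a matrix `A ∈ ℝ^{m₁m₂×n₁n₂}` (rows
indexed by `(i,a) : Fin m₁ × Fin m₂`, columns by `(j,b) : Fin n₁ × Fin n₂`, so the
`(i,j)` block of size `m₂×n₂` is `A_{i,j}(a,b) = A (i,a) (j,b)`): the `((j-1)m₁+i)`-th
row of `Ã` is `vec(A_{i,j})ᵀ`, where `vec` is column-major. -/
def rearrange {m₁ m₂ n₁ n₂ : ℕ} (A : Matrix (Fin m₁ × Fin m₂) (Fin n₁ × Fin n₂) ℝ) :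
    Matrix (Fin n₁ × Fin m₁) (Fin n₂ × Fin m₂) ℝ :=
  Matrix.of fun x y => A (x.2, y.2) (x.1, y.1)

section RankOne

variable {X Y : Type*} [Fintype X] [Fintype Y]

lemma frob_nonneg (M : Matrix X Y ℝ) : 0 ≤ frob M := Real.sqrt_nonneg _

lemma frob_sq (M : Matrix X Y ℝ) : frob M ^ 2 = ∑ i, ∑ j, M i j ^ 2 :=
  Real.sq_sqrt (by positivity)

lemma frob_sub_vecMulVec_sq (M : Matrix X Y ℝ) (x : X → ℝ) (y : Y → ℝ) :
    frob (M - vecMulVec x y) ^ 2 =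
      frob M ^ 2 - 2 * (x ⬝ᵥ M *ᵥ y) + (∑ i, x i ^ 2) * ∑ j, y j ^ 2 := by
  have entry : ∀ i j, (M - vecMulVec x y) i j ^ 2 =
      M i j ^ 2 - 2 * (x i * (M i j * y j)) + x i ^ 2 * y j ^ 2 := fun i j => by
    rw [Matrix.sub_apply, vecMulVec_apply]; ring
  simp only [frob_sq, entry, Finset.sum_add_distrib, Finset.sum_sub_distrib, ← Finset.mul_sum,
    ← Finset.sum_mul, dotProduct, mulVec]

lemma sum_sq_smul (c : ℝ) (x : X → ℝ) : ∑ i, (c • x) i ^ 2 = c ^ 2 * ∑ i, x i ^ 2 := by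
  simp only [Pi.smul_apply, smul_eq_mul, mul_pow, Finset.mul_sum]

lemma sum_sq_pos {x : X → ℝ} (hx : x ≠ 0) : 0 < ∑ i, x i ^ 2 := by
  obtain ⟨i, hi⟩ := Function.ne_iff.mp hx
  exact Finset.sum_pos' (fun j _ => sq_nonneg _) ⟨i, Finset.mem_univ i, sq_pos_of_ne_zero hi⟩

lemma sum_sq_inv_sqrt_smul {x : X → ℝ} (hx : x ≠ 0) :
    ∑ i, ((√(∑ i, x i ^ 2))⁻¹ • x) i ^ 2 = 1 := by
  rw [sum_sq_smul, inv_pow, Real.sq_sqrt (sum_sq_pos hx).le, inv_mul_cancel₀ (sum_sq_pos hx).ne']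

def BilinUnitBound (M : Matrix X Y ℝ) (σ : ℝ) : Prop :=
  ∀ u v, ∑ i, u i ^ 2 = 1 → ∑ j, v j ^ 2 = 1 → u ⬝ᵥ M *ᵥ v ≤ σ

namespace BilinUnitBound

variable {M : Matrix X Y ℝ} {σ : ℝ}

lemma dotProduct_mulVec_le (hmax : BilinUnitBound M σ) (x : X → ℝ) (y : Y → ℝ) :
    x ⬝ᵥ M *ᵥ y ≤ σ * (√(∑ i, x i ^ 2) * √(∑ j, y j ^ 2)) := by
  rcases eq_or_ne x 0 with rfl | hx
  · simp
  rcases eq_or_ne y 0 with rfl | hy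
  · simp
  have h := hmax _ _ (sum_sq_inv_sqrt_smul hx) (sum_sq_inv_sqrt_smul hy)
  rw [mulVec_smul, dotProduct_smul, smul_dotProduct, smul_eq_mul, smul_eq_mul,
    inv_mul_le_iff₀ (Real.sqrt_pos.mpr (sum_sq_pos hy)),
    inv_mul_le_iff₀ (Real.sqrt_pos.mpr (sum_sq_pos hx))] at h
  linarith

lemma nonneg (hmax : BilinUnitBound M σ) {u : X → ℝ} {v : Y → ℝ} (hu : ∑ i, u i ^ 2 = 1)
    (hv : ∑ j, v j ^ 2 = 1) (hMv : M *ᵥ v = σ • u) : 0 ≤ σ := by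
  have h := hmax (-u) v (by simpa using hu) hv
  have huu : u ⬝ᵥ u = 1 := by simpa [dotProduct, sq] using hu
  rw [hMv, neg_dotProduct, dotProduct_smul, huu, smul_eq_mul, mul_one] at h
  linarith

lemma frob_sub_smul_vecMulVec_le (hmax : BilinUnitBound M σ) {u : X → ℝ} {v : Y → ℝ}
    (hu : ∑ i, u i ^ 2 = 1) (hv : ∑ j, v j ^ 2 = 1) (hMv : M *ᵥ v = σ • u)
    (x : X → ℝ) (y : Y → ℝ) :
    frob (M - σ • vecMulVec u v) ≤ frob (M - vecMulVec x y) := by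
  have huu : u ⬝ᵥ u = 1 := by simpa [dotProduct, sq] using hu
  rw [← pow_le_pow_iff_left₀ (frob_nonneg _) (frob_nonneg _) two_ne_zero, ← smul_vecMulVec,
    frob_sub_vecMulVec_sq, frob_sub_vecMulVec_sq, sum_sq_smul, hu, hv, smul_dotProduct, hMv,
    dotProduct_smul, huu, smul_eq_mul, smul_eq_mul]
  have hxy := hmax.dotProduct_mulVec_le x y
  rw [← Real.sq_sqrt (by positivity : 0 ≤ ∑ i, x i ^ 2),
    ← Real.sq_sqrt (by positivity : 0 ≤ ∑ j, y j ^ 2)]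
  nlinarith [sq_nonneg (σ - √(∑ i, x i ^ 2) * √(∑ j, y j ^ 2))]

end BilinUnitBound

end RankOne

section Rearrange

variable {m₁ m₂ n₁ n₂ : ℕ}

lemma frob_rearrange (A : Matrix (Fin m₁ × Fin m₂) (Fin n₁ × Fin n₂) ℝ) :
    frob (rearrange A) = frob A := by
  unfold frob
  rw [← Fintype.sum_prod_type', ← Fintype.sum_prod_type']
  exact congrArg _ <| Fintype.sum_equiv
    ((Equiv.prodProdProdComm _ _ _ _).trans (Equiv.prodComm _ _)) _ _ fun _ => rfl

lemma rearrange_sub_kronecker (A : Matrix (Fin m₁ × Fin m₂) (Fin n₁ × Fin n₂) ℝ)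
    (B : Matrix (Fin m₁) (Fin n₁) ℝ) (C : Matrix (Fin m₂) (Fin n₂) ℝ) :
    rearrange (A - B ⊗ₖ C) = rearrange A - vecMulVec (vec B) (vec C) := by
  ext p q
  simp only [rearrange, Matrix.sub_apply, kroneckerMap_apply, of_apply, vecMulVec_apply, vec]

end Rearrange

theorem kron_nearest_general {m₁ m₂ n₁ n₂ : ℕ}
    (A : Matrix (Fin m₁ × Fin m₂) (Fin n₁ × Fin n₂) ℝ)
    (σ : ℝ) (u : Fin n₁ × Fin m₁ → ℝ) (v : Fin n₂ × Fin m₂ → ℝ)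
    (hu : ∑ x, u x ^ 2 = 1) (hv : ∑ y, v y ^ 2 = 1)
    (hAv : (rearrange A).mulVec v = σ • u)
    (hmax : ∀ (u' : Fin n₁ × Fin m₁ → ℝ) (v' : Fin n₂ × Fin m₂ → ℝ),
      ∑ x, u' x ^ 2 = 1 → ∑ y, v' y ^ 2 = 1 →
        u' ⬝ᵥ (rearrange A).mulVec v' ≤ σ)
    (B : Matrix (Fin m₁) (Fin n₁) ℝ) (C : Matrix (Fin m₂) (Fin n₂) ℝ)
    (hB : ∀ i j, B i j = Real.sqrt σ * u (j, i))
    (hC : ∀ a b, C a b = Real.sqrt σ * v (b, a)) :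
    ∀ (B' : Matrix (Fin m₁) (Fin n₁) ℝ) (C' : Matrix (Fin m₂) (Fin n₂) ℝ),
      frob (A - B ⊗ₖ C) ≤ frob (A - B' ⊗ₖ C') := by
  intro B' C'
  have hσ := BilinUnitBound.nonneg hmax hu hv hAv
  have hBC : vecMulVec (vec B) (vec C) = σ • vecMulVec u v := by
    have hvecB : vec B = √σ • u := funext fun p => hB p.2 p.1
    have hvecC : vec C = √σ • v := funext fun q => hC q.2 q.1
    rw [hvecB, hvecC, smul_vecMulVec, vecMulVec_smul, smul_smul, Real.mul_self_sqrt hσ]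
  rw [← frob_rearrange, ← frob_rearrange (A - B' ⊗ₖ C'), rearrange_sub_kronecker,
    rearrange_sub_kronecker, hBC]
  exact BilinUnitBound.frob_sub_smul_vecMulVec_le hmax hu hv hAv (vec B') (vec C')

/-- Van Loan–Pitsianis: let `A ∈ ℝ^{m×n}`, `m = m₁m₂`, `n = n₁n₂`, and
let `Ã` be the rearrangement of `A`.  If `σ` is the largest singular value of `Ã` with
corresponding (unit) left and right singular vectors `u, v`, then `B, C` defined by
`vec(B) = √σ u`, `vec(C) = √σ v` (column-major `vec`) minimize `‖A − B ⊗ C‖_F`. -/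
theorem kron_nearest {m₁ m₂ n₁ n₂ : ℕ}
    (A : Matrix (Fin m₁ × Fin m₂) (Fin n₁ × Fin n₂) ℝ)
    (σ : ℝ) (u : Fin n₁ × Fin m₁ → ℝ) (v : Fin n₂ × Fin m₂ → ℝ)
    (hσ : 0 ≤ σ)
    (hu : ∑ x, u x ^ 2 = 1) (hv : ∑ y, v y ^ 2 = 1)
    (hAv : (rearrange A).mulVec v = σ • u)
    (hAu : (rearrange A)ᵀ.mulVec u = σ • v)
    (hmax : ∀ (u' : Fin n₁ × Fin m₁ → ℝ) (v' : Fin n₂ × Fin m₂ → ℝ),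
      ∑ x, u' x ^ 2 = 1 → ∑ y, v' y ^ 2 = 1 →
        u' ⬝ᵥ (rearrange A).mulVec v' ≤ σ)
    (B : Matrix (Fin m₁) (Fin n₁) ℝ) (C : Matrix (Fin m₂) (Fin n₂) ℝ)
    (hB : ∀ i j, B i j = Real.sqrt σ * u (j, i))
    (hC : ∀ a b, C a b = Real.sqrt σ * v (b, a)) :
    ∀ (B' : Matrix (Fin m₁) (Fin n₁) ℝ) (C' : Matrix (Fin m₂) (Fin n₂) ℝ),
      frob (A - B ⊗ₖ C) ≤ frob (A - B' ⊗ₖ C') :=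
  kron_nearest_general A σ u v hu hv hAv hmax B C hB hC
end

section
/- The Frobenius norm of the Kronecker approximation residual equals the tail of singular values of the rearranged matrix: with A ∈ ℝ^{n₁×n₂}, factors s₁|n₁, s₂|n₂, and B ∈ ℝ^{(n₁/s₁)×(n₂/s₂)}, C ∈ ℝ^{s₁×s₂} the minimizers of ‖A − B⊗C‖_F, the minimum value is √(Σ_{i=2}^q σ̃ᵢ²), where σ̃₁ ≥ σ̃₂ ≥ ⋯ ≥ σ̃_q are the singular values of the rearranged matrix Ã and q = min{s₁s₂, n₁n₂/(s₁s₂)}. -/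
/-
The rearrangement `A ↦ Ã` only permutes entries, so it preserves the Frobenius norm, and it sends
`B ⊗ C` to the rank-one matrix `vec B (vec C)ᵀ`; since `vec` is a bijection, the problem is the best
rank-one approximation of `Ã = P diag(σ) Qᵀ`. Expanding
`‖Ã - u vᵀ‖² = ‖Ã‖² - 2 uᵀ Ã v + ‖u‖² ‖v‖²` and using `‖Ã v‖ ≤ σ₁ ‖v‖` (Bessel's inequality for the
orthonormal columns of `Q`), Cauchy–Schwarz and AM–GM give `‖Ã - u vᵀ‖² ≥ ∑ σᵢ² - σ₁²`, with
equality for `u = σ₁ P e₁`, `v = Q e₁`.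
-/

open Matrix Kronecker

section RankOneApproximation

variable {m n r : Type*}

lemma sum_sq_update_zero [Fintype r] [DecidableEq r] (d : r → ℝ) (k : r) :
    ∑ l, Function.update d k 0 l ^ 2 = ∑ l, d l ^ 2 - d k ^ 2 := by
  rw [← Finset.sum_erase_eq_sub (Finset.mem_univ k),
    ← Finset.add_sum_erase _ _ (Finset.mem_univ k), Function.update_self, zero_pow two_ne_zero,
    zero_add]
  exact Finset.sum_congr rfl fun l hl => by rw [Function.update_of_ne (Finset.ne_of_mem_erase hl)]

lemma mul_diagonal_mul_transpose_sub_vecMulVec [Fintype r] [DecidableEq r]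
    (P : Matrix m r ℝ) (Q : Matrix n r ℝ) (d : r → ℝ) (k : r) :
    P * diagonal d * Qᵀ - vecMulVec (d k • Pᵀ k) (Qᵀ k)
      = P * diagonal (Function.update d k 0) * Qᵀ := by
  ext i j
  rw [Matrix.sub_apply, mul_apply, mul_apply]
  simp only [mul_diagonal, transpose_apply, vecMulVec_apply, Pi.smul_apply, smul_eq_mul]
  rw [← Finset.add_sum_erase _ _ (Finset.mem_univ k),
    ← Finset.add_sum_erase _ _ (Finset.mem_univ k), Function.update_self]
  have hrest : ∑ l ∈ Finset.univ.erase k, P i l * Function.update d k 0 l * Q j l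
      = ∑ l ∈ Finset.univ.erase k, P i l * d l * Q j l :=
    Finset.sum_congr rfl fun l hl => by rw [Function.update_of_ne (Finset.ne_of_mem_erase hl)]
  rw [hrest]
  ring

variable [Fintype m] [Fintype n] [Fintype r]

lemma dotProduct_self_eq_sum_sq (v : n → ℝ) : v ⬝ᵥ v = ∑ i, v i ^ 2 := by
  simp only [dotProduct, sq]

lemma sum_sq_eq_trace_transpose_mul (M : Matrix m n ℝ) :
    ∑ i, ∑ j, M i j ^ 2 = trace (Mᵀ * M) := by
  rw [← vec_dotProduct_vec, dotProduct_self_eq_sum_sq, Fintype.sum_prod_type_right]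
  rfl

lemma sum_sq_sub_vecMulVec (M : Matrix m n ℝ) (u : m → ℝ) (v : n → ℝ) :
    ∑ i, ∑ j, (M - vecMulVec u v) i j ^ 2
      = ∑ i, ∑ j, M i j ^ 2 - 2 * ∑ i, u i * (M *ᵥ v) i
        + (∑ i, u i ^ 2) * ∑ j, v j ^ 2 := by
  rw [Finset.sum_mul_sum]
  simp only [Matrix.sub_apply, vecMulVec_apply, mulVec, dotProduct, Finset.mul_sum,
    ← Finset.sum_sub_distrib, ← Finset.sum_add_distrib]
  exact Finset.sum_congr rfl fun i _ => Finset.sum_congr rfl fun j _ => by ring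

lemma sum_sq_sub_le_sum_sq_sub_vecMulVec {M : Matrix m n ℝ} {c : ℝ} (hc : 0 ≤ c)
    (hM : ∀ v, ∑ i, (M *ᵥ v) i ^ 2 ≤ c * ∑ j, v j ^ 2) (u : m → ℝ) (v : n → ℝ) :
    ∑ i, ∑ j, M i j ^ 2 - c ≤ ∑ i, ∑ j, (M - vecMulVec u v) i j ^ 2 := by
  rw [sum_sq_sub_vecMulVec]
  set U := ∑ i, u i ^ 2
  set V := ∑ j, v j ^ 2
  set T := ∑ i, u i * (M *ᵥ v) i
  have hUV : 0 ≤ U * V := by positivity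
  -- Cauchy–Schwarz, then AM–GM: `(2T)² ≤ 4cUV ≤ (c + UV)²`
  have hT : T ^ 2 ≤ c * (U * V) := by
    have hU : 0 ≤ U := by positivity
    nlinarith [Finset.sum_mul_sq_le_sq_mul_sq Finset.univ u (M *ᵥ v),
      mul_le_mul_of_nonneg_left (hM v) hU]
  have h2T : (2 * T) ^ 2 ≤ (c + U * V) ^ 2 := by nlinarith [sq_nonneg (c - U * V)]
  linarith [(abs_le.mp (abs_le_of_sq_le_sq h2T (by positivity))).2]

variable [DecidableEq r]

lemma sum_sq_mulVec_of_transpose_mul_self {P : Matrix m r ℝ} (hP : Pᵀ * P = 1) (t : r → ℝ) :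
    ∑ i, (P *ᵥ t) i ^ 2 = ∑ k, t k ^ 2 := by
  simp only [← dotProduct_self_eq_sum_sq]
  rw [dotProduct_mulVec, vecMul_mulVec, hP, vecMul_one]

lemma sum_sq_transpose_mulVec_le {Q : Matrix n r ℝ} (hQ : Qᵀ * Q = 1) (v : n → ℝ) :
    ∑ k, (Qᵀ *ᵥ v) k ^ 2 ≤ ∑ j, v j ^ 2 := by
  set z := Qᵀ *ᵥ v
  have hz : ∑ k, z k ^ 2 = ∑ j, (Q *ᵥ z) j * v j := by
    rw [← dotProduct_self_eq_sum_sq, ← vecMul_transpose]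
    exact dotProduct_mulVec z Qᵀ v
  have hcs := Finset.sum_mul_sq_le_sq_mul_sq Finset.univ (Q *ᵥ z) v
  rw [← hz, sum_sq_mulVec_of_transpose_mul_self hQ] at hcs
  have hZ : 0 ≤ ∑ k, z k ^ 2 := by positivity
  have hV : 0 ≤ ∑ j, v j ^ 2 := by positivity
  nlinarith

lemma sum_sq_mul_diagonal_mul_transpose {P : Matrix m r ℝ} {Q : Matrix n r ℝ}
    (hP : Pᵀ * P = 1) (hQ : Qᵀ * Q = 1) (d : r → ℝ) :
    ∑ i, ∑ j, (P * diagonal d * Qᵀ) i j ^ 2 = ∑ k, d k ^ 2 := by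
  rw [sum_sq_eq_trace_transpose_mul]
  simp only [transpose_mul, transpose_transpose, diagonal_transpose, Matrix.mul_assoc]
  rw [← Matrix.mul_assoc Pᵀ P, hP, Matrix.one_mul, trace_mul_comm, Matrix.mul_assoc,
    Matrix.mul_assoc, hQ, Matrix.mul_one, diagonal_mul_diagonal, trace_diagonal]
  simp only [sq]

lemma sum_sq_mul_diagonal_mul_transpose_mulVec_le {P : Matrix m r ℝ} {Q : Matrix n r ℝ}
    (hP : Pᵀ * P = 1) (hQ : Qᵀ * Q = 1) {d : r → ℝ} {c : ℝ} (hc : 0 ≤ c)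
    (hd : ∀ k, d k ^ 2 ≤ c) (v : n → ℝ) :
    ∑ i, ((P * diagonal d * Qᵀ) *ᵥ v) i ^ 2 ≤ c * ∑ j, v j ^ 2 := by
  rw [← mulVec_mulVec, ← mulVec_mulVec, sum_sq_mulVec_of_transpose_mul_self hP]
  calc ∑ k, (diagonal d *ᵥ (Qᵀ *ᵥ v)) k ^ 2 = ∑ k, d k ^ 2 * (Qᵀ *ᵥ v) k ^ 2 := by
        simp only [mulVec_diagonal, mul_pow]
    _ ≤ ∑ k, c * (Qᵀ *ᵥ v) k ^ 2 := by gcongr with k; exact hd k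
    _ = c * ∑ k, (Qᵀ *ᵥ v) k ^ 2 := (Finset.mul_sum ..).symm
    _ ≤ c * ∑ j, v j ^ 2 := by gcongr; exact sum_sq_transpose_mulVec_le hQ v

theorem isLeast_frob_sub_vecMulVec {P : Matrix m r ℝ} {Q : Matrix n r ℝ}
    (hP : Pᵀ * P = 1) (hQ : Qᵀ * Q = 1) {σ : r → ℝ} {k : r} (hk : ∀ l, σ l ^ 2 ≤ σ k ^ 2) :
    IsLeast {x | ∃ u v, x = frob (P * diagonal σ * Qᵀ - vecMulVec u v)}
      (√(∑ l, σ l ^ 2 - σ k ^ 2)) := by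
  refine ⟨⟨σ k • Pᵀ k, Qᵀ k, ?_⟩, ?_⟩
  · rw [frob, mul_diagonal_mul_transpose_sub_vecMulVec, sum_sq_mul_diagonal_mul_transpose hP hQ,
      sum_sq_update_zero]
  · rintro _ ⟨u, v, rfl⟩
    refine Real.sqrt_le_sqrt ?_
    rw [← sum_sq_mul_diagonal_mul_transpose hP hQ]
    exact sum_sq_sub_le_sum_sq_sub_vecMulVec (sq_nonneg _)
      (sum_sq_mul_diagonal_mul_transpose_mulVec_le hP hQ (sq_nonneg _) hk) u v

end RankOneApproximation

section Rearrange

variable {m₁ m₂ n₁ n₂ : ℕ}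

lemma rearrange_sub (A B : Matrix (Fin m₁ × Fin m₂) (Fin n₁ × Fin n₂) ℝ) :
    rearrange (A - B) = rearrange A - rearrange B :=
  rfl

lemma rearrange_kronecker (B : Matrix (Fin m₁) (Fin n₁) ℝ) (C : Matrix (Fin m₂) (Fin n₂) ℝ) :
    rearrange (B ⊗ₖ C) = vecMulVec (vec B) (vec C) :=
  rfl

lemma frob_sub_kronecker (A : Matrix (Fin m₁ × Fin m₂) (Fin n₁ × Fin n₂) ℝ)
    (B : Matrix (Fin m₁) (Fin n₁) ℝ) (C : Matrix (Fin m₂) (Fin n₂) ℝ) :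
    frob (A - B ⊗ₖ C) = frob (rearrange A - vecMulVec (vec B) (vec C)) := by
  rw [← frob_rearrange, rearrange_sub, rearrange_kronecker]

end Rearrange

/-- the minimum of `‖A − B ⊗ C‖_F` over `B ∈ ℝ^{(n₁/s₁)×(n₂/s₂)}`,
`C ∈ ℝ^{s₁×s₂}` equals `√(∑_{i=2}^q σ̃ᵢ²)`, where `σ̃₁ ≥ ⋯ ≥ σ̃_q ≥ 0` are the singular
values of the rearrangement `Ã` of `A` (given here by a thin SVD
`Ã = P diag(σ̃) Qᵀ` with `PᵀP = QᵀQ = I`) and `q = min{s₁s₂, n₁n₂/(s₁s₂)}`.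
`A ∈ ℝ^{n₁×n₂}` is indexed blockwise, `p₁ = n₁/s₁`, `p₂ = n₂/s₂`. -/
theorem kron_approx_error {p₁ s₁ p₂ s₂ : ℕ}
    (A : Matrix (Fin p₁ × Fin s₁) (Fin p₂ × Fin s₂) ℝ)
    (σ : Fin (min (s₁ * s₂) (p₁ * p₂)) → ℝ)
    (P : Matrix (Fin p₂ × Fin p₁) (Fin (min (s₁ * s₂) (p₁ * p₂))) ℝ)
    (Q : Matrix (Fin s₂ × Fin s₁) (Fin (min (s₁ * s₂) (p₁ * p₂))) ℝ)
    (hP : Pᵀ * P = 1) (hQ : Qᵀ * Q = 1)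
    (hσ : Antitone σ) (hσ0 : ∀ i, 0 ≤ σ i)
    (hA : rearrange A = P * Matrix.diagonal σ * Qᵀ) :
    IsLeast
      {x : ℝ | ∃ (B : Matrix (Fin p₁) (Fin p₂) ℝ) (C : Matrix (Fin s₁) (Fin s₂) ℝ),
        x = frob (A - B ⊗ₖ C)}
      (Real.sqrt (∑ i ∈ Finset.univ.filter
        (fun i : Fin (min (s₁ * s₂) (p₁ * p₂)) => (i : ℕ) ≠ 0), σ i ^ 2)) := by
  have hsets : {x : ℝ | ∃ (B : Matrix (Fin p₁) (Fin p₂) ℝ) (C : Matrix (Fin s₁) (Fin s₂) ℝ),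
      x = frob (A - B ⊗ₖ C)} = {x | ∃ u v, x = frob (rearrange A - vecMulVec u v)} := by
    ext x
    simp only [Set.mem_ofPred_eq, frob_sub_kronecker]
    exact (vec_bijective.surjective.exists.trans
      (exists_congr fun _ => vec_bijective.surjective.exists)).symm
  rw [hsets, hA]
  rcases Nat.eq_zero_or_pos (min (s₁ * s₂) (p₁ * p₂)) with hq | hq
  · have : IsEmpty (Fin (min (s₁ * s₂) (p₁ * p₂))) := by rw [hq]; infer_instance
    rw [Subsingleton.elim P 0, Matrix.zero_mul, Matrix.zero_mul, Finset.univ_eq_empty,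
      Finset.filter_empty, Finset.sum_empty, Real.sqrt_zero]
    refine ⟨⟨0, 0, ?_⟩, fun _ ⟨_, _, hx⟩ => hx ▸ Real.sqrt_nonneg _⟩
    simp [frob]
  · set i₀ : Fin (min (s₁ * s₂) (p₁ * p₂)) := ⟨0, hq⟩
    have htail : Finset.univ.filter (fun i : Fin (min (s₁ * s₂) (p₁ * p₂)) => (i : ℕ) ≠ 0)
        = Finset.univ.erase i₀ := by
      ext i
      simp [i₀, Fin.ext_iff]
    rw [htail, Finset.sum_erase_eq_sub (Finset.mem_univ _)]
    exact isLeast_frob_sub_vecMulVec hP hQ fun k =>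
      pow_le_pow_left₀ (hσ0 k) (hσ (Nat.zero_le k.val)) 2
end

section
/- SVD-STP existence: let A ∈ ℝ^{n₁×n₂} with s₁|n₁, s₂|n₂. There exist orthogonal matrices U ∈ ℝ^{(n₁/s₁)×(n₁/s₁)}, V ∈ ℝ^{(n₂/s₂)×(n₂/s₂)} and a rectangular block-diagonal matrix Σ = blkdiag(S₁,…,S_p) ∈ ℝ^{n₁×n₂} with blocks Sₖ ∈ ℝ^{s₁×s₂} satisfying ‖S₁‖_F ≥ ⋯ ≥ ‖S_p‖_F (p = min{n₁/s₁, n₂/s₂}) such that A = U⋉Σ⋉Vᵀ + E₁ where ‖E₁‖_F = min_{B,C} ‖A − B⊗C‖_F over B ∈ ℝ^{(n₁/s₁)×(n₂/s₂)}, C ∈ ℝ^{s₁×s₂}. -/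
open Matrix Kronecker

/-- The rectangular block-diagonal matrix `blkdiag(S₁,…,S_p) ∈ ℝ^{p₁s₁×p₂s₂}` obtained by
aligning the `s₁×s₂` blocks `S₁,…,S_p` along the diagonal (all other blocks zero). -/
noncomputable def blkdiag {s₁ s₂ : ℕ} (p₁ p₂ p : ℕ)
    (S : Fin p → Matrix (Fin s₁) (Fin s₂) ℝ) :
    Matrix (Fin p₁ × Fin s₁) (Fin p₂ × Fin s₂) ℝ :=
  Matrix.of fun x y =>
    if h : (x.1 : ℕ) = (y.1 : ℕ) ∧ (x.1 : ℕ) < p then S ⟨x.1, h.2⟩ x.2 y.2 else 0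

/-! A best Kronecker approximation `B₀ ⊗ C₀` of `A` exists by compactness: rescaling
`B ⊗ C = (t B) ⊗ (t⁻¹ C)` balances the norms of the two factors, and a product with
`‖B ⊗ C‖ > 2 ‖A‖` is a worse approximation than `0`. If `B₀ = U D Vᵀ` is a singular value
decomposition, the blocks `Sₖ = σₖ C₀` give `Σ = D ⊗ C₀`, hence
`(U ⊗ I) Σ (V ⊗ I)ᵀ = (U D Vᵀ) ⊗ C₀ = B₀ ⊗ C₀`, and `‖Sₖ‖ = σₖ ‖C₀‖` decreases with `k`. -/

lemma Matrix.continuous_kronecker {α β γ δ R : Type*} [TopologicalSpace R] [Mul R]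
    [ContinuousMul R] : Continuous fun q : Matrix α β R × Matrix γ δ R => q.1 ⊗ₖ q.2 :=
  continuous_matrix fun _ _ => (continuous_fst.matrix_elem _ _).mul (continuous_snd.matrix_elem _ _)

section Frobenius

attribute [local instance] Matrix.frobeniusNormedAddCommGroup Matrix.frobeniusNormedSpace

variable {α β γ δ : Type*} [Fintype α] [Fintype β] [Fintype γ] [Fintype δ]

lemma frob_eq_norm (M : Matrix α β ℝ) : frob M = ‖M‖ := by
  simp [frob, frobenius_norm_def, Real.sqrt_eq_rpow]

lemma frobenius_norm_kronecker (B : Matrix α β ℝ) (C : Matrix γ δ ℝ) :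
    ‖B ⊗ₖ C‖ = ‖B‖ * ‖C‖ := by
  simp only [← frob_eq_norm, frob]
  rw [← Real.sqrt_mul (by positivity), Finset.sum_mul_sum, Fintype.sum_prod_type]
  simp only [Fintype.sum_prod_type, Finset.sum_mul_sum, kroneckerMap_apply, mul_pow]

lemma exists_kronecker_eq_norm_le_sqrt (B : Matrix α β ℝ) (C : Matrix γ δ ℝ) :
    ∃ B' C', B' ⊗ₖ C' = B ⊗ₖ C ∧ ‖B'‖ ≤ √‖B ⊗ₖ C‖ ∧ ‖C'‖ ≤ √‖B ⊗ₖ C‖ := by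
  rcases eq_or_ne B 0 with rfl | hB
  · exact ⟨0, 0, by simp, by simp, by simp⟩
  rcases eq_or_ne C 0 with rfl | hC
  · exact ⟨0, 0, by simp, by simp, by simp⟩
  have hB : 0 < ‖B‖ := norm_pos_iff.2 hB
  have hC : 0 < ‖C‖ := norm_pos_iff.2 hC
  have ht : 0 < √‖C‖ / √‖B‖ := by positivity
  refine ⟨(√‖C‖ / √‖B‖) • B, (√‖C‖ / √‖B‖)⁻¹ • C, ?_, le_of_eq ?_, le_of_eq ?_⟩
  · rw [smul_kronecker, kronecker_smul, smul_smul, mul_inv_cancel₀ ht.ne', one_smul]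
  · rw [norm_smul, frobenius_norm_kronecker, Real.norm_of_nonneg ht.le, Real.sqrt_mul hB.le]
    field_simp
    rw [Real.sq_sqrt hB.le]
  · rw [norm_smul, frobenius_norm_kronecker, Real.norm_of_nonneg (inv_pos.2 ht).le,
      Real.sqrt_mul hB.le]
    field_simp
    rw [Real.sq_sqrt hC.le]

open Metric in
lemma exists_forall_norm_sub_kronecker_le (A : Matrix (α × γ) (β × δ) ℝ) :
    ∃ (B₀ : Matrix α β ℝ) (C₀ : Matrix γ δ ℝ), ∀ B C, ‖A - B₀ ⊗ₖ C₀‖ ≤ ‖A - B ⊗ₖ C‖ := by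
  set K := closedBall (0 : Matrix α β ℝ) √(2 * ‖A‖) ×ˢ closedBall (0 : Matrix γ δ ℝ) √(2 * ‖A‖)
  have hK : IsCompact K := (isCompact_closedBall _ _).prod (isCompact_closedBall _ _)
  have h0K : (0, 0) ∈ K := by simp [K]
  obtain ⟨q₀, -, hq₀⟩ := hK.exists_isMinOn ⟨_, h0K⟩
    ((continuous_const.sub Matrix.continuous_kronecker).norm.continuousOn (s := K))
  have hq₀_le_norm : ‖A - q₀.1 ⊗ₖ q₀.2‖ ≤ ‖A‖ := by
    simpa using isMinOn_iff.1 hq₀ _ h0K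
  refine ⟨q₀.1, q₀.2, fun B C => ?_⟩
  by_cases hBC : ‖B ⊗ₖ C‖ ≤ 2 * ‖A‖
  · obtain ⟨B', C', hBC', hB', hC'⟩ := exists_kronecker_eq_norm_le_sqrt B C
    rw [← hBC']
    refine isMinOn_iff.1 hq₀ (B', C') ⟨?_, ?_⟩ <;> rw [mem_closedBall_zero_iff]
    · exact hB'.trans (Real.sqrt_le_sqrt hBC)
    · exact hC'.trans (Real.sqrt_le_sqrt hBC)
  · calc ‖A - q₀.1 ⊗ₖ q₀.2‖ ≤ ‖B ⊗ₖ C‖ - ‖A‖ := by linarith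
      _ ≤ ‖A - B ⊗ₖ C‖ := by rw [norm_sub_rev]; exact norm_sub_norm_le _ _

lemma frob_smul (c : ℝ) (M : Matrix α β ℝ) : frob (c • M) = |c| * frob M := by
  simp only [frob_eq_norm, norm_smul, Real.norm_eq_abs]

lemma exists_forall_frob_sub_kronecker_le (A : Matrix (α × γ) (β × δ) ℝ) :
    ∃ (B₀ : Matrix α β ℝ) (C₀ : Matrix γ δ ℝ), ∀ B C, frob (A - B₀ ⊗ₖ C₀) ≤ frob (A - B ⊗ₖ C) := by
  simpa only [frob_eq_norm] using exists_forall_norm_sub_kronecker_le A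

end Frobenius

namespace LinearMap

open Module

variable {𝕜 E F : Type*} [RCLike 𝕜]
  [NormedAddCommGroup E] [InnerProductSpace 𝕜 E] [FiniteDimensional 𝕜 E]
  [NormedAddCommGroup F] [InnerProductSpace 𝕜 F] [FiniteDimensional 𝕜 F]
  (T : E →ₗ[𝕜] F) {n m : ℕ}

lemma inner_apply_eigenvectorBasis_adjoint_comp_self (hn : finrank 𝕜 E = n) (i j : Fin n) :
    inner 𝕜 (T (T.isSymmetric_adjoint_comp_self.eigenvectorBasis hn i))
        (T (T.isSymmetric_adjoint_comp_self.eigenvectorBasis hn j)) =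
      if i = j then (T.singularValues i : 𝕜) ^ 2 else 0 := by
  rw [← adjoint_inner_right, ← comp_apply, IsSymmetric.apply_eigenvectorBasis, inner_smul_right,
    orthonormal_iff_ite.1 (OrthonormalBasis.orthonormal _), ← T.sq_singularValues_fin hn]
  split_ifs with h <;> simp [h]

lemma lt_finrank_of_singularValues_ne_zero (i : ℕ) (hi : T.singularValues i ≠ 0) :
    i < finrank 𝕜 E ∧ i < finrank 𝕜 F := by
  have := (T.singularValues_pos_iff_lt_finrank_range).1 ((T.singularValues_pos_iff_ne_zero i).2 hi)
  exact ⟨this.trans_le T.finrank_range_le, this.trans_le (Submodule.finrank_le _)⟩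

theorem exists_orthonormalBasis_apply_eq_singularValues_smul (hn : finrank 𝕜 E = n)
    (hm : finrank 𝕜 F = m) :
    ∃ (v : OrthonormalBasis (Fin n) 𝕜 E) (u : OrthonormalBasis (Fin m) 𝕜 F), ∀ i,
      T (v i) = if h : (i : ℕ) < m then (T.singularValues i : 𝕜) • u ⟨i, h⟩ else 0 := by
  -- right singular vectors: eigenvectors of `T† T`; left ones: `σᵢ⁻¹ • T vᵢ` for `σᵢ ≠ 0`,
  -- completed to an orthonormal basis
  set v := T.isSymmetric_adjoint_comp_self.eigenvectorBasis hn
  have hv (i j : Fin n) : inner 𝕜 (T (v i)) (T (v j)) =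
      if i = j then (T.singularValues i : 𝕜) ^ 2 else 0 :=
    T.inner_apply_eigenvectorBasis_adjoint_comp_self hn i j
  have hlt (i : ℕ) (hi : T.singularValues i ≠ 0) : i < n ∧ i < m :=
    hn ▸ hm ▸ T.lt_finrank_of_singularValues_ne_zero i hi
  set s : Set (Fin m) := {j | T.singularValues j ≠ 0}
  set w : Fin m → F := fun j =>
    if h : (j : ℕ) < n then (T.singularValues j : 𝕜)⁻¹ • T (v ⟨j, h⟩) else 0
  have hw : Orthonormal 𝕜 (s.domRestrict w) := by
    rw [orthonormal_iff_ite]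
    rintro ⟨j, hj⟩ ⟨k, hk⟩
    simp only [Set.domRestrict_apply, w, dif_pos (hlt _ hj).1, dif_pos (hlt _ hk).1,
      inner_smul_left, inner_smul_right, hv, Fin.mk.injEq, Subtype.mk.injEq, Fin.val_inj]
    split_ifs with hjk
    · subst hjk
      have : (T.singularValues j : 𝕜) ≠ 0 := RCLike.ofReal_ne_zero.2 hj
      simp only [map_inv₀, RCLike.conj_ofReal]
      field_simp
    · simp
  obtain ⟨u, hu⟩ := hw.exists_orthonormalBasis_extension_of_card_eq (by simp [hm])
  refine ⟨v, u, fun i => ?_⟩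
  by_cases hi : T.singularValues i = 0
  · have : inner 𝕜 (T (v i)) (T (v i)) = 0 := by rw [hv]; simp [hi]
    simp [inner_self_eq_zero.1 this, hi]
  · have him := (hlt i hi).2
    rw [dif_pos him, hu _ hi]
    simp [w, hi]

end LinearMap

namespace Matrix

variable {R : Type*}

def rectDiagonal [Zero R] (m n : ℕ) (d : ℕ → R) : Matrix (Fin m) (Fin n) R :=
  of fun i j => if (i : ℕ) = j then d i else 0

variable {m n : ℕ}

lemma mul_rectDiagonal_apply {l : Type*} [NonUnitalNonAssocSemiring R] (M : Matrix l (Fin m) R)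
    (d : ℕ → R) (a : l) (j : Fin n) :
    (M * rectDiagonal m n d) a j = if h : (j : ℕ) < m then M a ⟨j, h⟩ * d j else 0 := by
  simp only [mul_apply, rectDiagonal, of_apply, mul_ite, mul_zero]
  split_ifs with h
  · rw [Finset.sum_eq_single ⟨j, h⟩ (fun k _ hk => if_neg (fun e => hk (Fin.ext e))) (by simp),
      if_pos rfl]
  · exact Finset.sum_eq_zero fun k _ => if_neg fun e : (k : ℕ) = j => h (e ▸ k.isLt)

variable {𝕜 : Type*} [RCLike 𝕜]

theorem exists_svd (B : Matrix (Fin m) (Fin n) 𝕜) :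
    ∃ U ∈ unitaryGroup (Fin m) 𝕜, ∃ V ∈ unitaryGroup (Fin n) 𝕜,
      B = U * rectDiagonal m n (fun k => ((toEuclideanLin B).singularValues k : 𝕜)) * star V := by
  obtain ⟨v, u, h⟩ := (toEuclideanLin B).exists_orthonormalBasis_apply_eq_singularValues_smul
    finrank_euclideanSpace_fin finrank_euclideanSpace_fin
  let b₁ := EuclideanSpace.basisFun (Fin m) 𝕜
  let b₂ := EuclideanSpace.basisFun (Fin n) 𝕜
  refine ⟨b₁.toBasis.toMatrix u, b₁.toMatrix_orthonormalBasis_mem_unitary u,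
    b₂.toBasis.toMatrix v, b₂.toMatrix_orthonormalBasis_mem_unitary v, ?_⟩
  have hBV : B * b₂.toBasis.toMatrix v = b₁.toBasis.toMatrix u * rectDiagonal m n
      (fun k => ((toEuclideanLin B).singularValues k : 𝕜)) := by
    ext a i
    rw [mul_rectDiagonal_apply]
    have := congrArg (fun x => x a) (h i)
    simp only [toLpLin_apply, PiLp.toLp_apply] at this
    simp only [mul_apply, Module.Basis.toMatrix_apply, OrthonormalBasis.coe_toBasis_repr_apply,
      b₁, b₂, EuclideanSpace.basisFun_repr]
    refine this.trans ?_
    split_ifs <;> simp [RCLike.real_smul_eq_coe_mul, mul_comm]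
  rw [← hBV, Matrix.mul_assoc, mem_unitaryGroup_iff.1 (b₂.toMatrix_orthonormalBasis_mem_unitary v),
    Matrix.mul_one]

end Matrix

lemma Matrix.kronecker_one_mul_kronecker_mul_transpose {R l m n o p q : Type*} [CommSemiring R]
    [Fintype m] [Fintype n] [Fintype o] [Fintype p] [DecidableEq o] [DecidableEq p]
    (U : Matrix l m R) (D : Matrix m n R) (V : Matrix q n R) (C : Matrix o p R) :
    (U ⊗ₖ (1 : Matrix o o R)) * (D ⊗ₖ C) * (V ⊗ₖ (1 : Matrix p p R))ᵀ = (U * D * Vᵀ) ⊗ₖ C := by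
  rw [← kroneckerMap_transpose, transpose_one, ← mul_kronecker_mul, ← mul_kronecker_mul,
    Matrix.one_mul, Matrix.mul_one]

lemma blkdiag_smul_eq_rectDiagonal_kronecker {p₁ p₂ s₁ s₂ : ℕ} (d : ℕ → ℝ)
    (C : Matrix (Fin s₁) (Fin s₂) ℝ) :
    blkdiag p₁ p₂ (min p₁ p₂) (fun k => d k • C) = Matrix.rectDiagonal p₁ p₂ d ⊗ₖ C := by
  ext ⟨i, a⟩ ⟨j, b⟩
  simp only [blkdiag, Matrix.rectDiagonal, of_apply, kroneckerMap_apply]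
  split_ifs with h h' h'
  · simp [h']
  · exact absurd h.1 h'
  · exact absurd ⟨h', lt_min i.isLt (h' ▸ j.isLt)⟩ h
  · simp

/-- SVD-STP existence: let `A ∈ ℝ^{n₁×n₂}` with `s₁ ∣ n₁`, `s₂ ∣ n₂`
(`p₁ = n₁/s₁`, `p₂ = n₂/s₂`, rows/columns of `A` indexed blockwise).  There exist
orthogonal `U ∈ ℝ^{p₁×p₁}`, `V ∈ ℝ^{p₂×p₂}` and blocks `S₁,…,S_p ∈ ℝ^{s₁×s₂}`
(`p = min{p₁,p₂}`) with `‖S₁‖_F ≥ ⋯ ≥ ‖S_p‖_F` such that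
`A = U ⋉ Σ ⋉ Vᵀ + E₁ = (U ⊗ I_{s₁}) Σ (V ⊗ I_{s₂})ᵀ + E₁` with
`Σ = blkdiag(S₁,…,S_p)` and `‖E₁‖_F = min_{B,C} ‖A − B ⊗ C‖_F`. -/
theorem svd_stp_exists {p₁ s₁ p₂ s₂ : ℕ}
    (A : Matrix (Fin p₁ × Fin s₁) (Fin p₂ × Fin s₂) ℝ) :
    ∃ (U : Matrix (Fin p₁) (Fin p₁) ℝ) (V : Matrix (Fin p₂) (Fin p₂) ℝ)
      (S : Fin (min p₁ p₂) → Matrix (Fin s₁) (Fin s₂) ℝ),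
      Uᵀ * U = 1 ∧ U * Uᵀ = 1 ∧ Vᵀ * V = 1 ∧ V * Vᵀ = 1 ∧
      Antitone (fun i => frob (S i)) ∧
      (∀ (B : Matrix (Fin p₁) (Fin p₂) ℝ) (C : Matrix (Fin s₁) (Fin s₂) ℝ),
        frob (A - (U ⊗ₖ (1 : Matrix (Fin s₁) (Fin s₁) ℝ)) *
            blkdiag p₁ p₂ (min p₁ p₂) S *
            ((V ⊗ₖ (1 : Matrix (Fin s₂) (Fin s₂) ℝ)))ᵀ) ≤
          frob (A - B ⊗ₖ C)) := by
  obtain ⟨B₀, C₀, hB₀C₀⟩ := exists_forall_frob_sub_kronecker_le A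
  obtain ⟨U, hU, V, hV, hsvd⟩ := B₀.exists_svd
  have hU' := And.intro (Matrix.mem_unitaryGroup_iff'.1 hU) (Matrix.mem_unitaryGroup_iff.1 hU)
  have hV' := And.intro (Matrix.mem_unitaryGroup_iff'.1 hV) (Matrix.mem_unitaryGroup_iff.1 hV)
  simp only [Matrix.star_eq_conjTranspose, conjTranspose_eq_transpose_of_trivial,
    RCLike.ofReal_real_eq_id, id_eq] at hU' hV' hsvd
  set T := toEuclideanLin B₀
  refine ⟨U, V, fun k => T.singularValues k • C₀, hU'.1, hU'.2, hV'.1, hV'.2, fun k l hkl => ?_,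
    fun B C => ?_⟩
  · simp only [frob_smul, abs_of_nonneg (T.singularValues_nonneg _)]
    exact mul_le_mul_of_nonneg_right (T.singularValues_antitone hkl) (Real.sqrt_nonneg _)
  · rw [blkdiag_smul_eq_rectDiagonal_kronecker, Matrix.kronecker_one_mul_kronecker_mul_transpose,
      ← hsvd]
    exact hB₀C₀ B C
end

section
/- Core unfolding formula for HOSVD-STP: if ℬ = 𝒜 ⋉₁ U⁽¹⁾ᵀ ⋯ ⋉_d U⁽ᵈ⁾ᵀ with orthogonal U⁽ᵏ⁾ ∈ ℝ^{(n_k/s_k)×(n_k/s_k)}, then ℬ_(k) = Û⁽ᵏ⁾ᵀ 𝒜_(k) Π⁽⁻ᵏ⁾ where Û⁽ᵏ⁾ = U⁽ᵏ⁾⊗I_{s_k} and Π⁽⁻ᵏ⁾ = Û⁽ᵈ⁾⊗⋯⊗Û⁽ᵏ⁺¹⁾⊗Û⁽ᵏ⁻¹⁾⊗⋯⊗Û⁽¹⁾, and consequently ℬ_(k)ℬ_(k)ᵀ = Û⁽ᵏ⁾ᵀ 𝒜_(k) 𝒜_(k)ᵀ Û⁽ᵏ⁾. -/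
open Matrix Kronecker

/-- `U ⊗ I_s` reinterpreted as a `c × e` matrix, where `a * s = c` and `b * s = e`. -/
noncomputable def liftMat {a b : ℕ} (s : ℕ) {c e : ℕ} (h₁ : a * s = c) (h₂ : b * s = e)
    (U : Matrix (Fin a) (Fin b) ℝ) : Matrix (Fin c) (Fin e) ℝ :=
  Matrix.reindex (finCongr h₁) (finCongr h₂) (kronI s U)

/-- The multilinear (Tucker) product `ℬ ×₁ M⁽¹⁾ ×₂ M⁽²⁾ ⋯ ×_d M⁽ᵈ⁾`, i.e. the result of
the chain of modal products of a tensor `ℬ ∈ ℝ^{m₁×⋯×m_d}` with matrices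
`M⁽ᵏ⁾ ∈ ℝ^{n_k×m_k}` applied along modes `1, …, d`.  In particular the modal STP chain
`ℬ ⋉₁ U⁽¹⁾ ⋯ ⋉_d U⁽ᵈ⁾` is `tucker (fun k => liftMat (s k) _ _ (U k)) ℬ`. -/
noncomputable def tucker {d : ℕ} {m n : Fin d → ℕ}
    (M : (k : Fin d) → Matrix (Fin (n k)) (Fin (m k)) ℝ)
    (B : ((i : Fin d) → Fin (m i)) → ℝ) : ((i : Fin d) → Fin (n i)) → ℝ :=
  fun idx => ∑ jdx : (i : Fin d) → Fin (m i), (∏ k, M k (idx k) (jdx k)) * B jdx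

/-- The mode-`k` unfolding of a tensor, as a matrix whose columns are indexed by the
multi-indices over the remaining modes (ordered column-major via `⟨i⟩` in the paper). -/
def unfold {d : ℕ} {n : Fin d → ℕ} (k : Fin d) (A : ((i : Fin d) → Fin (n i)) → ℝ) :
    Matrix (Fin (n k)) ((i : {i : Fin d // i ≠ k}) → Fin (n i)) ℝ :=
  Matrix.of fun a c =>
    A fun i => if h : i = k then Fin.cast (congrArg n h).symm a else c ⟨i, h⟩

/-! Unfolding along mode `k` turns the Tucker product into a matrix product: the factor of
mode `k` acts on the rows of `𝒜₍ₖ₎`, and the remaining factors act jointly on its columns through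
their Kronecker product `Π⁽⁻ᵏ⁾`, here indexed by multi-indices so that no flattening order is
involved. The Kronecker product is multiplicative, so `Π⁽⁻ᵏ⁾` inherits orthogonality from the
factors `Û⁽ⁱ⁾ = U⁽ⁱ⁾ ⊗ I` and cancels in `ℬ₍ₖ₎ ℬ₍ₖ₎ᵀ`. -/

section LiftMat

variable {a b s c e : ℕ}

theorem liftMat_eq_submatrix (h₁ : a * s = c) (h₂ : b * s = e) (U : Matrix (Fin a) (Fin b) ℝ) :
    liftMat s h₁ h₂ U = (U ⊗ₖ (1 : Matrix (Fin s) (Fin s) ℝ)).submatrix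
      (finProdFinEquiv.trans (finCongr h₁)).symm (finProdFinEquiv.trans (finCongr h₂)).symm :=
  rfl

theorem liftMat_transpose (h₁ : a * s = c) (h₂ : b * s = e) (U : Matrix (Fin a) (Fin b) ℝ) :
    liftMat s h₂ h₁ Uᵀ = (liftMat s h₁ h₂ U)ᵀ := by
  rw [liftMat_eq_submatrix, liftMat_eq_submatrix, transpose_submatrix, ← kroneckerMap_transpose,
    transpose_one]

theorem liftMat_mul (h : a * s = c) (U V : Matrix (Fin a) (Fin a) ℝ) :
    liftMat s h h U * liftMat s h h V = liftMat s h h (U * V) := by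
  rw [liftMat_eq_submatrix, liftMat_eq_submatrix, liftMat_eq_submatrix, submatrix_mul_equiv,
    ← mul_kronecker_mul, Matrix.one_mul]

theorem liftMat_one (h : a * s = c) : liftMat s h h (1 : Matrix (Fin a) (Fin a) ℝ) = 1 := by
  rw [liftMat_eq_submatrix, one_kronecker_one, submatrix_one_equiv]

theorem liftMat_mul_transpose_self (h : a * s = c) {U : Matrix (Fin a) (Fin a) ℝ}
    (hU : U * Uᵀ = 1) : liftMat s h h U * (liftMat s h h U)ᵀ = 1 := by
  rw [← liftMat_transpose, liftMat_mul, hU, liftMat_one]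

end LiftMat

namespace Matrix

variable {ι R : Type*} [Fintype ι] [CommSemiring R] {α β γ : ι → Type*}

def piKronecker (M : ∀ i, Matrix (α i) (β i) R) : Matrix (∀ i, α i) (∀ i, β i) R :=
  of fun c c' => ∏ i, M i (c i) (c' i)

theorem piKronecker_transpose (M : ∀ i, Matrix (α i) (β i) R) :
    (piKronecker M)ᵀ = piKronecker fun i => (M i)ᵀ :=
  rfl

theorem piKronecker_mul [DecidableEq ι] [∀ i, Fintype (β i)] (M : ∀ i, Matrix (α i) (β i) R)
    (N : ∀ i, Matrix (β i) (γ i) R) :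
    piKronecker M * piKronecker N = piKronecker fun i => M i * N i := by
  ext c c''
  simp only [piKronecker, mul_apply, of_apply, Fintype.prod_sum, Finset.prod_mul_distrib]

theorem piKronecker_one [∀ i, DecidableEq (α i)] :
    piKronecker (fun i => (1 : Matrix (α i) (α i) R)) = 1 := by
  ext c c'
  by_cases h : c = c'
  · subst h
    simp [piKronecker]
  · obtain ⟨i, hi⟩ := Function.ne_iff.mp h
    simp only [piKronecker, of_apply, one_apply_ne h]
    exact Finset.prod_eq_zero (Finset.mem_univ i) (one_apply_ne hi)

theorem mul_mul_transpose_eq_of_mul_transpose_eq_one {m n : Type*} [Fintype n] [DecidableEq n]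
    (X : Matrix m n R) {P : Matrix n n R} (hP : P * Pᵀ = 1) :
    X * P * (X * P)ᵀ = X * Xᵀ := by
  rw [transpose_mul, Matrix.mul_assoc, ← Matrix.mul_assoc P, hP, Matrix.one_mul]

end Matrix

namespace Equiv

variable {α : Type*} [DecidableEq α] (i : α) (β : α → Type*) (p : β i × ∀ j : {j // j ≠ i}, β j)

@[simp]
theorem piSplitAt_symm_apply_self : (piSplitAt i β).symm p i = p.1 := by
  simp

@[simp]
theorem piSplitAt_symm_apply_coe (j : {j // j ≠ i}) : (piSplitAt i β).symm p j = p.2 j := by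
  simp [j.2]

end Equiv

theorem unfold_apply {d : ℕ} {n : Fin d → ℕ} (k : Fin d) (A : ((i : Fin d) → Fin (n i)) → ℝ)
    (a : Fin (n k)) (c : (i : {i : Fin d // i ≠ k}) → Fin (n i)) :
    unfold k A a c = A ((Equiv.piSplitAt k fun i => Fin (n i)).symm (a, c)) := by
  simp only [unfold, of_apply]
  congr
  funext i
  by_cases h : i = k
  · subst h
    simp
  · simp [h]

theorem unfold_tucker {d : ℕ} {m n : Fin d → ℕ}
    (M : (k : Fin d) → Matrix (Fin (n k)) (Fin (m k)) ℝ) (A : ((i : Fin d) → Fin (m i)) → ℝ)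
    (k : Fin d) :
    unfold k (tucker M A) =
      M k * unfold k A * (piKronecker fun i : {i : Fin d // i ≠ k} => M i)ᵀ := by
  ext a c
  rw [unfold_apply, tucker, ← (Equiv.piSplitAt k fun i => Fin (m i)).symm.sum_comp,
    Fintype.sum_prod_type, Finset.sum_comm]
  simp only [mul_apply, unfold_apply, Finset.sum_mul, Fintype.prod_eq_mul_prod_subtype_ne _ k]
  refine Finset.sum_congr rfl fun c' _ => Finset.sum_congr rfl fun j _ => ?_
  simp only [piKronecker, transpose_apply, of_apply, Equiv.piSplitAt_symm_apply_self,
    Equiv.piSplitAt_symm_apply_coe]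
  ring

theorem hosvd_stp_core_unfold_general {d : ℕ} {n s nq : Fin d → ℕ}
    (hn : ∀ k, nq k * s k = n k)
    (U : (k : Fin d) → Matrix (Fin (nq k)) (Fin (nq k)) ℝ)
    (horth' : ∀ k, U k * (U k)ᵀ = 1)
    (A B : ((i : Fin d) → Fin (n i)) → ℝ)
    (hB : B = tucker (fun k => liftMat (s k) (hn k) (hn k) (U k)ᵀ) A) (k : Fin d) :
    unfold k B =
        (liftMat (s k) (hn k) (hn k) (U k))ᵀ * unfold k A *
          Matrix.of (fun (c c' : (i : {i : Fin d // i ≠ k}) → Fin (n i)) =>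
            ∏ i : {i : Fin d // i ≠ k},
              liftMat (s i) (hn i) (hn i) (U i) (c i) (c' i)) ∧
      unfold k B * (unfold k B)ᵀ =
        (liftMat (s k) (hn k) (hn k) (U k))ᵀ * (unfold k A * (unfold k A)ᵀ) *
          liftMat (s k) (hn k) (hn k) (U k) := by
  set Û := fun i : Fin d => liftMat (s i) (hn i) (hn i) (U i)
  set P := piKronecker fun i : {i : Fin d // i ≠ k} => Û i
  have hcore : unfold k B = (Û k)ᵀ * unfold k A * P := by
    simp only [hB, unfold_tucker, liftMat_transpose, piKronecker_transpose, transpose_transpose]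
    rfl
  have hP : P * Pᵀ = 1 := by
    simp only [P, Û, piKronecker_transpose, piKronecker_mul,
      liftMat_mul_transpose_self _ (horth' _)]
    exact piKronecker_one
  refine ⟨hcore, ?_⟩
  rw [hcore, mul_mul_transpose_eq_of_mul_transpose_eq_one _ hP, transpose_mul, transpose_transpose]
  simp only [Matrix.mul_assoc]
  rfl

/-- core unfolding formula for the HOSVD-STP: if
`ℬ = 𝒜 ⋉₁ U⁽¹⁾ᵀ ⋯ ⋉_d U⁽ᵈ⁾ᵀ` with orthogonal `U⁽ᵏ⁾ ∈ ℝ^{(n_k/s_k)×(n_k/s_k)}`, then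
`ℬ₍ₖ₎ = Û⁽ᵏ⁾ᵀ 𝒜₍ₖ₎ Π⁽⁻ᵏ⁾` where `Û⁽ᵏ⁾ = U⁽ᵏ⁾ ⊗ I_{s_k}` and
`Π⁽⁻ᵏ⁾ = Û⁽ᵈ⁾ ⊗ ⋯ ⊗ Û⁽ᵏ⁺¹⁾ ⊗ Û⁽ᵏ⁻¹⁾ ⊗ ⋯ ⊗ Û⁽¹⁾` (realized on column-major
multi-indices as the matrix with `(c,c')` entry `∏_{i≠k} Û⁽ⁱ⁾ (c i) (c' i)`), and
consequently `ℬ₍ₖ₎ ℬ₍ₖ₎ᵀ = Û⁽ᵏ⁾ᵀ 𝒜₍ₖ₎ 𝒜₍ₖ₎ᵀ Û⁽ᵏ⁾`. -/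
theorem hosvd_stp_core_unfold {d : ℕ} {n s nq : Fin d → ℕ}
    (hn : ∀ k, nq k * s k = n k)
    (U : (k : Fin d) → Matrix (Fin (nq k)) (Fin (nq k)) ℝ)
    (horth : ∀ k, (U k)ᵀ * U k = 1) (horth' : ∀ k, U k * (U k)ᵀ = 1)
    (A B : ((i : Fin d) → Fin (n i)) → ℝ)
    (hB : B = tucker (fun k => liftMat (s k) (hn k) (hn k) (U k)ᵀ) A) (k : Fin d) :
    unfold k B =
        (liftMat (s k) (hn k) (hn k) (U k))ᵀ * unfold k A *
          Matrix.of (fun (c c' : (i : {i : Fin d // i ≠ k}) → Fin (n i)) =>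
            ∏ i : {i : Fin d // i ≠ k},
              liftMat (s i) (hn i) (hn i) (U i) (c i) (c' i)) ∧
      unfold k B * (unfold k B)ᵀ =
        (liftMat (s k) (hn k) (hn k) (U k))ᵀ * (unfold k A * (unfold k A)ᵀ) *
          liftMat (s k) (hn k) (hn k) (U k) :=
  hosvd_stp_core_unfold_general hn U horth' A B hB k
end
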